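/- Let 1 ≤ k ≤ n − 1 and let A > 0 and 0 < m ≤ M be real numbers. Then there exists a constant C > 0, depending only on n, k, A, m, M, such that for every λ = (λ_1, …, λ_n) ∈ Γ_k with λ_1 ≥ … ≥ λ_n, m ≤ σ_k(λ) ≤ M, and σ_{k+1}(λ) > −A, one has λ_n > −C. -/

import Mathlib

noncomputable def esymm (n m : ℕ) (lam : Fin n → ℝ) : ℝ :=
  ∑ s ∈ (Finset.univ : Finset (Fin n)).powersetCard m, ∏ i ∈ s, lam i

def GardingCone (n k : ℕ) : Set (Fin n → ℝ) :=
  {lam | ∀ j, 1 ≤ j → j ≤ k → 0 < esymm n j lam}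

/-!
Let `x = λ_n` and let `s` be the remaining entries. Only `x < 0` needs an argument, and then `s`
again lies in `Γ_k`. With `a, b, c` the values of `σ_{k-1}, σ_k, σ_{k+1}` at `s` one has
`σ_k(λ) = b + x a` and `σ_{k+1}(λ) = c + x b`. Newton's inequality `Q a c ≤ P b²` (where
`Q - P = n`) and `b ≤ M - x a` turn `-A < c + x b` into `-x n a b < Q A a + P M b`; as
`b ≥ m` and Maclaurin's inequality bounds `a` from below in terms of `m`, this bounds `-x`.

Newton's inequality is proved the classical way: differentiating `∏ (X + λ_i)` leaves a
real-rooted polynomial whose three lowest coefficients are multiples of `σ_{i+2}, σ_{i+1}, σ_i`,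
and for a real-rooted polynomial of degree `D` one has `2 D a₀ a₂ ≤ (D - 1) a₁²`: after
reversing the polynomial this is `2 D σ₂ ≤ (D - 1) σ₁²` for its roots.
-/

open Polynomial
open scoped Nat

namespace Multiset

theorem esymm_cons {R : Type*} [CommSemiring R] (a : R) (s : Multiset R) (j : ℕ) :
    (a ::ₘ s).esymm (j + 1) = s.esymm (j + 1) + a * s.esymm j := by
  simp only [esymm, powersetCard_cons, map_add, sum_add, map_map, Function.comp_def, prod_cons,
    sum_map_mul_left]

theorem esymm_zero {R : Type*} [CommSemiring R] (s : Multiset R) : s.esymm 0 = 1 := by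
  simp [esymm]

theorem esymm_eq_zero_of_card_lt {R : Type*} [CommSemiring R] {s : Multiset R} {j : ℕ}
    (h : card s < j) : s.esymm j = 0 := by
  simp [esymm, powersetCard_eq_empty _ h]

theorem le_card_of_esymm_ne_zero {s : Multiset ℝ} {j : ℕ} (h : s.esymm j ≠ 0) :
    j ≤ card s :=
  not_lt.1 fun hlt => h (esymm_eq_zero_of_card_lt hlt)

theorem esymm_pos_of_cons {x : ℝ} (hx : x ≤ 0) {s : Multiset ℝ} {k : ℕ}
    (h : ∀ j, 1 ≤ j → j ≤ k → 0 < (x ::ₘ s).esymm j) : ∀ j ≤ k, 0 < s.esymm j := by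
  intro j hj
  induction j with
  | zero => simp [esymm_zero]
  | succ j ih =>
    have hcons := h (j + 1) (by omega) hj
    rw [esymm_cons] at hcons
    linarith [mul_nonpos_of_nonpos_of_nonneg hx (ih (by omega)).le]

theorem two_mul_card_mul_esymm_two_le (s : Multiset ℝ) :
    2 * card s * s.esymm 2 ≤ (card s - 1) * s.esymm 1 ^ 2 := by
  induction s using Multiset.induction with
  | empty => simp [esymm, powersetCard_zero_right]
  | cons a s ih =>
    rw [esymm_cons, esymm_cons, esymm_zero, card_cons]
    push_cast
    obtain rfl | hs := eq_or_ne s 0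
    · simp [esymm, powersetCard_zero_right]
    refine le_of_mul_le_mul_left ?_ (by exact_mod_cast card_pos.2 hs : (0 : ℝ) < card s)
    linear_combination ((card s : ℝ) + 1) * ih + sq_nonneg (s.esymm 1 - card s * a)

end Multiset

namespace Polynomial

theorem Splits.reverse {K : Type*} [Field K] {f : K[X]} (hf : f.Splits) : f.reverse.Splits := by
  induction hf using Submonoid.closure_induction with
  | mem p hp =>
    rcases hp with ⟨a, rfl⟩ | ⟨a, rfl⟩
    · simp
    · exact Splits.of_natDegree_le_one ((reverse_natDegree_le _).trans (natDegree_X_add_C a).le)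
  | one => rw [← C_1, reverse_C]; exact Splits.C 1
  | mul p q _ _ hp hq => rw [reverse_mul_of_domain]; exact hp.mul hq

theorem Splits.derivative {p : ℝ[X]} (hp : p.Splits) : (Polynomial.derivative p).Splits := by
  rw [splits_iff_card_roots] at hp ⊢
  have := p.card_roots_le_derivative
  have := (Polynomial.derivative p).card_roots'
  have := p.natDegree_derivative_le
  omega

theorem Splits.iterate_derivative {p : ℝ[X]} (hp : p.Splits) (j : ℕ) :
    (Polynomial.derivative^[j] p).Splits := by
  induction j with
  | zero => exact hp
  | succ j ih => rw [Function.iterate_succ_apply']; exact ih.derivative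

theorem Splits.two_mul_natDegree_mul_leadingCoeff_mul_coeff_sub_two_le {h : ℝ[X]}
    (hs : h.Splits) (hD : 2 ≤ h.natDegree) :
    2 * h.natDegree * (h.leadingCoeff * h.coeff (h.natDegree - 2)) ≤
      (h.natDegree - 1) * h.coeff (h.natDegree - 1) ^ 2 := by
  have hcard : h.roots.card = h.natDegree := splits_iff_card_roots.1 hs
  rw [coeff_eq_esymm_roots_of_splits hs (Nat.sub_le _ _),
    coeff_eq_esymm_roots_of_splits hs (Nat.sub_le _ _), Nat.sub_sub_self hD,
    Nat.sub_sub_self (by omega : 1 ≤ h.natDegree), ← hcard]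
  linear_combination
    mul_le_mul_of_nonneg_left h.roots.two_mul_card_mul_esymm_two_le (sq_nonneg h.leadingCoeff)

theorem Splits.two_mul_natDegree_mul_coeff_zero_mul_coeff_two_le {g : ℝ[X]}
    (hs : g.Splits) (hD : 2 ≤ g.natDegree) :
    2 * g.natDegree * (g.coeff 0 * g.coeff 2) ≤ (g.natDegree - 1) * g.coeff 1 ^ 2 := by
  by_cases h0 : g.coeff 0 = 0
  · rw [h0, zero_mul, mul_zero]
    have : (2 : ℝ) ≤ g.natDegree := by exact_mod_cast hD
    exact mul_nonneg (by linarith) (sq_nonneg _)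
  have htrail : g.natTrailingDegree = 0 := natTrailingDegree_eq_zero.2 (.inr h0)
  have hrev : g.reverse.natDegree = g.natDegree := by
    rw [reverse_natDegree, htrail, Nat.sub_zero]
  have hcoeff (j : ℕ) (hj : j ≤ g.natDegree) :
      g.reverse.coeff (g.natDegree - j) = g.coeff j := by
    rw [coeff_reverse, revAt_le (Nat.sub_le _ _), Nat.sub_sub_self hj]
  have := hs.reverse.two_mul_natDegree_mul_leadingCoeff_mul_coeff_sub_two_le (hrev ▸ hD)
  rwa [reverse_leadingCoeff, trailingCoeff, htrail, hrev, hcoeff 1 (by omega), hcoeff 2 hD] at this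

end Polynomial

namespace Multiset

theorem factorial_mul_coeff_iterate_derivative_prod_X_add_C {R : Type*} [CommSemiring R]
    (s : Multiset R) {j d : ℕ} (h : j + d ≤ card s) :
    (j ! : R) * (derivative^[d] (s.map fun r => X + C r).prod).coeff j =
      (j + d) ! * s.esymm (card s - (j + d)) := by
  rw [coeff_iterate_derivative, nsmul_eq_mul, prod_X_add_C_coeff _ h, ← mul_assoc,
    ← Nat.cast_mul, ← Nat.factorial_mul_descFactorial (Nat.le_add_left d j), Nat.add_sub_cancel]

theorem esymm_mul_esymm_le_sq (s : Multiset ℝ) (i : ℕ) :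
    (i + 2) * (card s - i) * (s.esymm i * s.esymm (i + 2)) ≤
      (i + 1) * (card s - i - 1) * s.esymm (i + 1) ^ 2 := by
  rcases le_or_gt (i + 2) (card s) with hi | hsmall
  · obtain ⟨d, hd⟩ := Nat.exists_eq_add_of_le' hi
    set g := derivative^[d] (s.map fun r => X + C r).prod
    have hcoeff (j : ℕ) (hj : j ≤ i + 2) :
        (j ! : ℝ) * g.coeff j = (j + d) ! * s.esymm (i + 2 - j) := by
      rw [factorial_mul_coeff_iterate_derivative_prod_X_add_C _ (by omega)]
      congr 2; omega
    have hgdeg : g.natDegree = i + 2 := by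
      refine le_antisymm ((natDegree_iterate_derivative _ d).trans ?_) (le_natDegree_of_ne_zero ?_)
      · rw [natDegree_multiset_prod_of_monic _ (by simp [monic_X_add_C])]
        simp [hd]
      · have := hcoeff (i + 2) le_rfl
        rw [Nat.sub_self, esymm_zero, mul_one] at this
        exact right_ne_zero_of_mul (a := ((i + 2)! : ℝ)) (by rw [this]; positivity)
    have hgs : g.Splits := (Splits.multisetProd (by simp [Splits.X_add_C])).iterate_derivative d
    have hg := hgs.two_mul_natDegree_mul_coeff_zero_mul_coeff_two_le (by omega)
    have h0 := hcoeff 0 (by omega)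
    have h1 := hcoeff 1 (by omega)
    have h2 := hcoeff 2 (by omega)
    simp only [Nat.factorial, Nat.sub_zero, Nat.add_sub_cancel, show i + 2 - 1 = i + 1 from rfl,
      add_comm _ d, Nat.add_zero] at h0 h1 h2
    push_cast [one_mul] at h0 h1 h2
    rw [hgdeg, h0, h1] at hg
    have hN : (card s : ℝ) = d + i + 2 := by rw [hd]; push_cast; ring
    refine le_of_mul_le_mul_right ?_ (by positivity : (0 : ℝ) < (d + 1) * d ! ^ 2)
    rw [hN]
    push_cast at hg
    linear_combination hg - ((i : ℝ) + 2) * d ! * s.esymm (i + 2) * h2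
  · rw [esymm_eq_zero_of_card_lt hsmall, mul_zero, mul_zero]
    rcases lt_or_ge (card s) (i + 1) with h | h
    · rw [esymm_eq_zero_of_card_lt h]; simp
    · have : (i : ℝ) + 1 ≤ card s := by exact_mod_cast h
      exact mul_nonneg (mul_nonneg (by positivity) (by linarith)) (sq_nonneg _)

noncomputable def esymmMean (s : Multiset ℝ) (j : ℕ) : ℝ := s.esymm j / (card s).choose j

theorem esymmMean_mul_esymmMean_le_sq (s : Multiset ℝ) {i : ℕ} (hi : i + 2 ≤ card s) :
    s.esymmMean i * s.esymmMean (i + 2) ≤ s.esymmMean (i + 1) ^ 2 := by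
  have hc (j : ℕ) (hj : j ≤ card s) : (0 : ℝ) < (card s).choose j := by
    exact_mod_cast Nat.choose_pos hj
  have hsucc (j : ℕ) (hj : j ≤ card s) :
      ((card s).choose (j + 1) : ℝ) * (j + 1) = (card s).choose j * (card s - j) := by
    rw [← Nat.cast_sub hj]
    exact_mod_cast Nat.choose_succ_right_eq (card s) j
  have h0 := hsucc i (by omega)
  have h1 := hsucc (i + 1) (by omega)
  push_cast at h1
  have := hc i (by omega)
  have := hc (i + 1) (by omega)
  have := hc (i + 2) (by omega)
  unfold esymmMean
  rw [div_mul_div_comm, div_pow, div_le_div_iff₀ (by positivity) (by positivity)]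
  refine le_of_mul_le_mul_left ?_ (by positivity : (0 : ℝ) < (i + 1) * (i + 2))
  linear_combination ((card s).choose i * (card s).choose (i + 1) : ℝ) * esymm_mul_esymm_le_sq s i
    + (i + 2) * s.esymm i * s.esymm (i + 2) * (card s).choose (i + 1) * h0
    - (i + 1) * s.esymm (i + 1) ^ 2 * (card s).choose i * h1

theorem esymmMean_pos {s : Multiset ℝ} {j : ℕ} (h : 0 < s.esymm j) : 0 < s.esymmMean j :=
  div_pos h (by exact_mod_cast Nat.choose_pos (le_card_of_esymm_ne_zero h.ne'))

theorem esymmMean_succ_pow_le {s : Multiset ℝ} {k : ℕ} (hpos : ∀ j ≤ k + 1, 0 < s.esymm j) :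
    s.esymmMean (k + 1) ^ k ≤ s.esymmMean k ^ (k + 1) := by
  induction k with
  | zero => simp [esymmMean, esymm_zero]
  | succ k ih =>
    have hp (j : ℕ) (hj : j ≤ k + 2) : 0 < s.esymmMean j := esymmMean_pos (hpos j hj)
    have hnewton := esymmMean_mul_esymmMean_le_sq s
      (le_card_of_esymm_ne_zero (hpos (k + 2) le_rfl).ne')
    have ih := ih fun j hj => hpos j (by omega)
    refine le_of_mul_le_mul_right ?_ (pow_pos (hp k (by omega)) (k + 1))
    calc s.esymmMean (k + 2) ^ (k + 1) * s.esymmMean k ^ (k + 1)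
        = (s.esymmMean k * s.esymmMean (k + 2)) ^ (k + 1) := by ring
      _ ≤ (s.esymmMean (k + 1) ^ 2) ^ (k + 1) :=
        pow_le_pow_left₀ (mul_pos (hp k (by omega)) (hp (k + 2) le_rfl)).le hnewton _
      _ = s.esymmMean (k + 1) ^ (k + 2) * s.esymmMean (k + 1) ^ k := by ring
      _ ≤ s.esymmMean (k + 1) ^ (k + 2) * s.esymmMean k ^ (k + 1) :=
        mul_le_mul_of_nonneg_left ih (pow_pos (hp (k + 1) (by omega)) _).le

theorem min_one_esymmMean_succ_le {s : Multiset ℝ} {k : ℕ}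
    (hpos : ∀ j ≤ k + 1, 0 < s.esymm j) :
    min 1 (s.esymmMean (k + 1)) ≤ s.esymmMean k := by
  have hmac := esymmMean_succ_pow_le hpos
  have hk := esymmMean_pos (hpos k (by omega))
  have hk1 := esymmMean_pos (hpos (k + 1) le_rfl)
  rcases le_total (s.esymmMean (k + 1)) 1 with hle | hle
  · refine (min_le_right _ _).trans (le_of_pow_le_pow_left₀ k.succ_ne_zero hk.le ?_)
    exact (pow_le_pow_of_le_one hk1.le hle k.le_succ).trans hmac
  · exact (min_le_left _ _).trans
      ((one_le_pow_iff_of_nonneg hk.le k.succ_ne_zero).1 ((one_le_pow₀ hle).trans hmac))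

theorem choose_mul_min_one_le_esymm {s : Multiset ℝ} {k : ℕ} {m : ℝ}
    (hpos : ∀ j ≤ k + 1, 0 < s.esymm j) (hm : m ≤ s.esymm (k + 1)) :
    (card s).choose k * min 1 (m / (card s).choose (k + 1)) ≤ s.esymm k := by
  have hN := le_card_of_esymm_ne_zero (hpos (k + 1) le_rfl).ne'
  have hc₀ : (0 : ℝ) < (card s).choose k := by exact_mod_cast Nat.choose_pos (by omega)
  have hc₁ : (0 : ℝ) < (card s).choose (k + 1) := by exact_mod_cast Nat.choose_pos hN
  calc (card s).choose k * min 1 (m / (card s).choose (k + 1))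
      ≤ (card s).choose k * min 1 (s.esymmMean (k + 1)) := by unfold esymmMean; gcongr
    _ ≤ (card s).choose k * s.esymmMean k := by gcongr; exact min_one_esymmMean_succ_le hpos
    _ = s.esymm k := by unfold esymmMean; field_simp

theorem neg_mul_esymm_mul_esymm_lt {A M x : ℝ} {s : Multiset ℝ} {k : ℕ}
    (ha : 0 < s.esymm k) (hb : 0 ≤ s.esymm (k + 1)) (hk : k + 1 ≤ card s)
    (hup : (x ::ₘ s).esymm (k + 1) ≤ M) (hnext : -A < (x ::ₘ s).esymm (k + 2)) :
    -x * (s.esymm k * s.esymm (k + 1) * (card s + 1)) <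
      (k + 2) * (card s - k) * A * s.esymm k +
        (k + 1) * (card s - k - 1) * M * s.esymm (k + 1) := by
  rw [esymm_cons] at hup
  rw [show k + 2 = k + 1 + 1 from rfl, esymm_cons] at hnext
  have hN : (k : ℝ) + 1 ≤ card s := by exact_mod_cast hk
  have hQ : (0 : ℝ) < (k + 2) * (card s - k) := mul_pos (by positivity) (by linarith)
  have hP : (0 : ℝ) ≤ (k + 1) * (card s - k - 1) := mul_nonneg (by positivity) (by linarith)
  have h1 := mul_lt_mul_of_pos_left (show -x * s.esymm (k + 1) < A + s.esymm (k + 2) by linarith)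
    (mul_pos hQ ha)
  have h2 := mul_le_mul_of_nonneg_left (show s.esymm (k + 1) ≤ M - x * s.esymm k by linarith)
    (mul_nonneg hP hb)
  linear_combination h1 + esymm_mul_esymm_le_sq s k + h2

end Multiset

/-- The bound for the cone `Γ_(k+1)` and `N` entries besides the smallest one: `(k + 2) (N - k)`
and `(k + 1) (N - k - 1)` are the weights in Newton's inequality, and the denominator
`N.choose k * min 1 (m / N.choose (k + 1))` is Maclaurin's lower bound for `σ_k`. -/
noncomputable def lowestEntryBound (N k : ℕ) (A m M : ℝ) : ℝ :=
  ((k + 2) * (N - k) * A / m +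
    (k + 1) * (N - k - 1) * M / (N.choose k * min 1 (m / N.choose (k + 1)))) / (N + 1)

theorem lowestEntryBound_pos {N k : ℕ} (hk : k + 1 ≤ N) {A m M : ℝ} (hA : 0 < A) (hm : 0 < m)
    (hM : 0 < M) : 0 < lowestEntryBound N k A m M := by
  have hN : (k : ℝ) + 1 ≤ N := by exact_mod_cast hk
  have hc (j : ℕ) (hj : j ≤ N) : (0 : ℝ) < N.choose j := by exact_mod_cast Nat.choose_pos hj
  have := hc k (by omega)
  have := hc (k + 1) hk
  unfold lowestEntryBound
  have : 0 < min 1 (m / N.choose (k + 1)) := lt_min one_pos (by positivity)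
  have : (0 : ℝ) ≤ N - k - 1 := by linarith
  have : (0 : ℝ) < N - k := by linarith
  positivity

theorem Multiset.neg_lowestEntryBound_lt {A m M x : ℝ} (hA : 0 ≤ A) (hm : 0 < m) (hx : x ≤ 0)
    {s : Multiset ℝ} {k : ℕ}
    (hcone : ∀ j, 1 ≤ j → j ≤ k + 1 → 0 < (x ::ₘ s).esymm j)
    (hlow : m ≤ (x ::ₘ s).esymm (k + 1)) (hup : (x ::ₘ s).esymm (k + 1) ≤ M)
    (hnext : -A < (x ::ₘ s).esymm (k + 2)) :
    -lowestEntryBound (card s) k A m M < x := by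
  have hs := esymm_pos_of_cons hx hcone
  have ha : 0 < s.esymm k := hs k (by omega)
  have hb : 0 < s.esymm (k + 1) := hs (k + 1) le_rfl
  have hkN : k + 1 ≤ card s := le_card_of_esymm_ne_zero hb.ne'
  have key := neg_mul_esymm_mul_esymm_lt ha hb.le hkN hup hnext
  have hM : 0 < M := hm.trans_le (hlow.trans hup)
  rw [esymm_cons] at hlow
  have hbm : m ≤ s.esymm (k + 1) := by linarith [mul_nonpos_of_nonpos_of_nonneg hx ha.le]
  have haa₀ := choose_mul_min_one_le_esymm hs hbm
  set N := card s
  set a := s.esymm k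
  set b := s.esymm (k + 1)
  set a₀ := N.choose k * min 1 (m / N.choose (k + 1))
  have hN : (k : ℝ) + 1 ≤ N := by exact_mod_cast hkN
  have ha₀ : 0 < a₀ := by
    have : (0 : ℝ) < N.choose (k + 1) := by exact_mod_cast Nat.choose_pos hkN
    exact mul_pos (by exact_mod_cast Nat.choose_pos (by omega)) (lt_min one_pos (by positivity))
  have hQA : (k + 2) * (N - k) * A * a ≤ (k + 2) * (N - k) * A / m * (a * b) := by
    rw [div_mul_eq_mul_div, le_div_iff₀ hm]
    have : (0 : ℝ) ≤ (k + 2) * (N - k) * A * a :=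
      mul_nonneg (mul_nonneg (mul_nonneg (by positivity) (by linarith)) hA) ha.le
    linear_combination mul_le_mul_of_nonneg_left hbm this
  have hPM : (k + 1) * (N - k - 1) * M * b ≤ (k + 1) * (N - k - 1) * M / a₀ * (a * b) := by
    rw [div_mul_eq_mul_div, le_div_iff₀ ha₀]
    have : (0 : ℝ) ≤ (k + 1) * (N - k - 1) * M * b :=
      mul_nonneg (mul_nonneg (mul_nonneg (by positivity) (by linarith)) hM.le) hb.le
    linear_combination mul_le_mul_of_nonneg_left haa₀ this
  rw [neg_lt, lowestEntryBound, lt_div_iff₀ (by positivity)]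
  refine lt_of_mul_lt_mul_right ?_ (mul_pos ha hb).le
  linear_combination key + hQA + hPM

theorem esymm_eq_esymm_cons_erase {n : ℕ} (lam : Fin n → ℝ) (i : Fin n) (j : ℕ) :
    esymm n j lam = (lam i ::ₘ (Finset.univ.val.erase i).map lam).esymm j := by
  rw [esymm, ← Finset.esymm_map_val, ← Multiset.map_cons,
    Multiset.cons_erase (Finset.mem_univ _)]

/-- For `1 ≤ k ≤ n-1`, `A > 0`, `0 < m ≤ M`, there is `C > 0`
(depending only on `n, k, A, m, M`) such that every decreasing `λ ∈ Γ_k` with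
`m ≤ σ_k(λ) ≤ M` and `σ_{k+1}(λ) > -A` satisfies `λ_n > -C`. -/
theorem stmt1 (n k : ℕ) (hk1 : 1 ≤ k) (hkn : k + 1 ≤ n)
    (A m M : ℝ) (hA : 0 < A) (hm : 0 < m) (hmM : m ≤ M) :
    ∃ C : ℝ, 0 < C ∧ ∀ lam : Fin n → ℝ,
      lam ∈ GardingCone n k →
      (∀ i j : Fin n, i ≤ j → lam j ≤ lam i) →
      m ≤ esymm n k lam → esymm n k lam ≤ M →
      -A < esymm n (k + 1) lam →
      -C < lam ⟨n - 1, by omega⟩ := by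
  obtain ⟨k, rfl⟩ := Nat.exists_eq_add_of_le' hk1
  have hC := lowestEntryBound_pos (N := n - 1) (k := k) (by omega) hA hm (hm.trans_le hmM)
  refine ⟨_, hC, fun lam hcone _ hlow hup hnext => ?_⟩
  set i : Fin n := ⟨n - 1, by omega⟩
  have hcard : Multiset.card ((Finset.univ.val.erase i).map lam) = n - 1 := by simp
  simp only [GardingCone, Set.mem_ofPred_eq, esymm_eq_esymm_cons_erase lam i]
    at hcone hlow hup hnext
  rcases le_or_gt (lam i) 0 with hx | hx
  · rw [← hcard]; exact Multiset.neg_lowestEntryBound_lt hA.le hm hx hcone hlow hup hnext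
  · linarith
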